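/- arXiv:1211.3893 — 2 statements merged into one kernel-verified Lean document; each statement's English description precedes it below -/
import Mathlib

section
/- Let φ satisfy Assumption (φ), suppose φ is of type T(p, q, K₁) with 1 < p ≤ q < ∞, let A satisfy Assumption (A), and let P be a 2×2 matrix. Then there is K > 0, depending only on K₁, p and q, such that the shifted N-function φ_{|P|} is of type T(p̄, q̄, K), and both (φ_{|P|})* and (φ*)_{|A(P)|} are of type T(q̄', p̄', K). -/
open MeasureTheory Metric Set Filter
open scoped ENNReal RealInnerProductSpace Topology

noncomputable section

/-- `Eu n` is Euclidean space `ℝⁿ`. -/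
abbrev Eu (n : ℕ) := EuclideanSpace ℝ (Fin n)

/-- `Mat m n` is the space of real `m × n` matrices. -/
abbrev Mat (m n : ℕ) := Matrix (Fin m) (Fin n) ℝ

/-- The Frobenius inner product of matrices. -/
def frobInner {m n : ℕ} (P Q : Mat m n) : ℝ := ∑ i, ∑ j, P i j * Q i j

/-- The Frobenius norm of a matrix. -/
def frobNorm {m n : ℕ} (P : Mat m n) : ℝ := Real.sqrt (frobInner P P)

/-- The symmetric part of a square matrix. -/
def symPart {n : ℕ} (M : Mat n n) : Mat n n := (2⁻¹ : ℝ) • (M + M.transpose)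

/-- The antisymmetric part of a square matrix. -/
def skewPart {n : ℕ} (M : Mat n n) : Mat n n := (2⁻¹ : ℝ) • (M - M.transpose)

/-- The `j`-th standard basis vector of `ℝⁿ`. -/
def euBasis (n : ℕ) (j : Fin n) : Eu n := EuclideanSpace.single j 1

/-- Smooth compactly supported test functions with support inside `Ω`. -/
def IsTest {n : ℕ} {F : Type} [NormedAddCommGroup F] [NormedSpace ℝ F]
    (Ω : Set (Eu n)) (ξ : Eu n → F) : Prop :=
  ContDiff ℝ (⊤ : ℕ∞) ξ ∧ HasCompactSupport ξ ∧ tsupport ξ ⊆ Ω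

/-- The gradient matrix `(∇ξ)_{ij} = ∂_j ξ_i` of a map `ξ : ℝⁿ → ℝᵐ`. -/
def gradOf {n m : ℕ} (ξ : Eu n → Eu m) (x : Eu n) : Mat m n :=
  Matrix.of fun i j => fderiv ℝ (fun y => ξ y i) x (euBasis n j)

/-- The divergence of a vector field `ξ : ℝⁿ → ℝⁿ`. -/
def divOf {n : ℕ} (ξ : Eu n → Eu n) (x : Eu n) : ℝ := Matrix.trace (gradOf ξ x)

/-- `v` is locally integrable on `Ω` with weak gradient `dv` (an `m × n` matrix field). -/
def HasWeakGradOn {n m : ℕ} (v : Eu n → Eu m) (dv : Eu n → Mat m n) (Ω : Set (Eu n)) : Prop :=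
  (∀ i, LocallyIntegrableOn (fun x => v x i) Ω) ∧
  (∀ i j, LocallyIntegrableOn (fun x => dv x i j) Ω) ∧
  ∀ ξ : Eu n → ℝ, IsTest Ω ξ → ∀ (i : Fin m) (j : Fin n),
    ∫ x in Ω, v x i * fderiv ℝ ξ x (euBasis n j) = - ∫ x in Ω, dv x i j * ξ x

/-- A scalar function `f` has weak partial derivatives `df` on `Ω`. -/
def HasWeakPartialsOn {n : ℕ} (f : Eu n → ℝ) (df : Eu n → Fin n → ℝ) (Ω : Set (Eu n)) : Prop :=
  LocallyIntegrableOn f Ω ∧ (∀ j, LocallyIntegrableOn (fun x => df x j) Ω) ∧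
  ∀ ξ : Eu n → ℝ, IsTest Ω ξ → ∀ j : Fin n,
    ∫ x in Ω, f x * fderiv ℝ ξ x (euBasis n j) = - ∫ x in Ω, df x j * ξ x

/-- The mean `⟨f⟩_B` of a matrix-valued function over a set, computed entrywise. -/
def avgM {k m n : ℕ} (f : Eu k → Mat m n) (B : Set (Eu k)) : Mat m n :=
  Matrix.of fun i j => ⨍ x in B, f x i j

/-- Mean oscillation `M^♯_B f` of a scalar function over the ball of center `z`, radius `R`. -/
def MsharpS {n : ℕ} (f : Eu n → ℝ) (z : Eu n) (R : ℝ) : ℝ :=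
  ⨍ x in ball z R, |f x - ⨍ y in ball z R, f y|

/-- Mean oscillation `M^♯_B f` of a matrix-valued function over the ball of center `z`,
radius `R`. -/
def MsharpM {k m n : ℕ} (f : Eu k → Mat m n) (z : Eu k) (R : ℝ) : ℝ :=
  ⨍ x in ball z R, frobNorm (f x - avgM f (ball z R))

/-- The weighted `BMO_ω` seminorm of a scalar function on `U` (valued in `ℝ≥0∞`);
`ω(r) = r^β` gives the Campanato seminorm `𝓛^{1,2+β}` and `ω ≡ 1` the `BMO` seminorm. -/
def BMOS {n : ℕ} (ω : ℝ → ℝ) (f : Eu n → ℝ) (U : Set (Eu n)) : ℝ≥0∞ :=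
  ⨆ (z : Eu n) (R : ℝ) (_ : 0 < R) (_ : ball z R ⊆ U),
    ENNReal.ofReal ((ω R)⁻¹ * MsharpS f z R)

/-- The weighted `BMO_ω` seminorm of a matrix-valued function on `U`. -/
def BMOM {k m n : ℕ} (ω : ℝ → ℝ) (f : Eu k → Mat m n) (U : Set (Eu k)) : ℝ≥0∞ :=
  ⨆ (z : Eu k) (R : ℝ) (_ : 0 < R) (_ : ball z R ⊆ U),
    ENNReal.ofReal ((ω R)⁻¹ * MsharpM f z R)

/-- Vanishing mean oscillation for scalar functions:
`sup { M^♯_Q f : balls Q ⊆ U, |Q| < ε } → 0` as `ε → 0⁺`. -/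
def IsVMOS {n : ℕ} (f : Eu n → ℝ) (U : Set (Eu n)) : Prop :=
  ∀ δ : ℝ, 0 < δ → ∃ ε : ℝ, 0 < ε ∧ ∀ (z : Eu n) (R : ℝ), 0 < R → ball z R ⊆ U →
    volume (ball z R) < ENNReal.ofReal ε → MsharpS f z R ≤ δ

/-- Vanishing mean oscillation for matrix-valued functions. -/
def IsVMOM {k m n : ℕ} (f : Eu k → Mat m n) (U : Set (Eu k)) : Prop :=
  ∀ δ : ℝ, 0 < δ → ∃ ε : ℝ, 0 < ε ∧ ∀ (z : Eu k) (R : ℝ), 0 < R → ball z R ⊆ U →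
    volume (ball z R) < ENNReal.ofReal ε → MsharpM f z R ≤ δ

/-- `φ` is an N-function with (right-)derivative `φ'`. -/
structure IsNFunction (φ φ' : ℝ → ℝ) : Prop where
  zero : φ 0 = 0
  convex : ConvexOn ℝ (Ici 0) φ
  hasDeriv : ∀ t ∈ Ici (0 : ℝ), HasDerivWithinAt φ (φ' t) (Ici 0) t
  rightCont : ∀ t ∈ Ici (0 : ℝ), ContinuousWithinAt φ' (Ici t) t
  mono : MonotoneOn φ' (Ici 0)
  derivZero : φ' 0 = 0
  derivPos : ∀ t : ℝ, 0 < t → 0 < φ' t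

/-- The complementary (conjugate) N-function `φ*(u) = sup_{t ≥ 0} (u t − φ(t))`. -/
def conjFn (φ : ℝ → ℝ) (u : ℝ) : ℝ := sSup ((fun t => u * t - φ t) '' Ici 0)

/-- The shifted N-function `φ_a(t) = ∫₀ᵗ φ'(a+s)·s/(a+s) ds`, described by the
derivative `φ'` of `φ`. -/
def shiftFn (φ' : ℝ → ℝ) (a t : ℝ) : ℝ := ∫ s in (0 : ℝ)..t, φ' (a + s) * s / (a + s)

/-- The derivative `(φ_a)'(t) = φ'(a+t)·t/(a+t)` of the shifted N-function. -/
def shiftDeriv (φ' : ℝ → ℝ) (a t : ℝ) : ℝ := φ' (a + t) * t / (a + t)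

/-- The right-continuous inverse of a non-decreasing function, used as the derivative
of the complementary function: `(φ*)' = (φ')⁻¹`. -/
def rcInv (g : ℝ → ℝ) (t : ℝ) : ℝ := sSup {s : ℝ | 0 ≤ s ∧ g s ≤ t}

/-- The function `V(Q) = (φ'(|Q|)|Q|)^{1/2} Q/|Q|`, `V(0) = 0`. -/
def Vfn (φ' : ℝ → ℝ) (Q : Mat 2 2) : Mat 2 2 :=
  if Q = 0 then 0 else (Real.sqrt (φ' (frobNorm Q) * frobNorm Q) / frobNorm Q) • Q

/-- `ψ` is of type `T(p, q, K)`: `ψ(st) ≤ K max{s^p, s^q} ψ(t)` for all `s, t ≥ 0`. -/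
def TypeT (ψ : ℝ → ℝ) (p q K : ℝ) : Prop :=
  ∀ s t : ℝ, 0 ≤ s → 0 ≤ t → ψ (s * t) ≤ K * max (s ^ p) (s ^ q) * ψ t

/-- `p̄ = min{p, 2}`. -/
def pbar (p : ℝ) : ℝ := min p 2

/-- `q̄ = max{q, 2}`. -/
def qbar (q : ℝ) : ℝ := max q 2

/-- The Hölder-conjugate exponent `p' = p/(p−1)`. -/
def conjExp (p : ℝ) : ℝ := p / (p - 1)

/-- Assumption (φ), with the characteristics `c₀, c₁, cm` of `φ` made explicit:
`φ` is an N-function, `C²` on `(0,∞)` and `C¹` on `[0,∞)`, `φ''` is almost monotone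
(with constant `cm`) and `c₀ t φ''(t) ≤ φ'(t) ≤ c₁ t φ''(t)` for `t > 0`. -/
structure AssumptionPhi (φ φ' φ'' : ℝ → ℝ) (c₀ c₁ cm : ℝ) : Prop where
  nfun : IsNFunction φ φ'
  contDiffTwo : ContDiffOn ℝ 2 φ (Ioi 0)
  contOne : ContinuousOn φ' (Ici 0)
  derivTwo : ∀ t : ℝ, 0 < t → HasDerivAt φ' (φ'' t) t
  cm_pos : 0 < cm
  almostMono : (∀ s t : ℝ, 0 < s → s ≤ t → φ'' s ≤ cm * φ'' t) ∨
               (∀ s t : ℝ, 0 < s → s ≤ t → cm * φ'' t ≤ φ'' s)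
  c0_pos : 0 < c₀
  c1_pos : 0 < c₁
  lowerBound : ∀ t : ℝ, 0 < t → c₀ * (t * φ'' t) ≤ φ' t
  upperBound : ∀ t : ℝ, 0 < t → φ' t ≤ c₁ * (t * φ'' t)

/-- Assumption (A), with the constants `cA, CA` made explicit: `A` is continuous,
locally Lipschitz away from `0`, `A(0) = 0`, maps symmetric matrices to symmetric
matrices, and has non-standard `φ`-growth described by `φ''`. -/
structure AssumptionA (φ'' : ℝ → ℝ) (A : Mat 2 2 → Mat 2 2) (cA CA : ℝ) : Prop where
  cont : Continuous A
  locLip : ∀ P : Mat 2 2, P ≠ 0 → ∃ K ε : ℝ, 0 < ε ∧ ∀ Q₁ Q₂ : Mat 2 2,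
    frobNorm (Q₁ - P) < ε → frobNorm (Q₂ - P) < ε →
    frobNorm (A Q₁ - A Q₂) ≤ K * frobNorm (Q₁ - Q₂)
  zero : A 0 = 0
  symm : ∀ D : Mat 2 2, D.IsSymm → (A D).IsSymm
  cA_pos : 0 < cA
  CA_pos : 0 < CA
  coercive : ∀ P Q : Mat 2 2, P.IsSymm → Q.IsSymm → P ≠ 0 →
    cA * φ'' (frobNorm P + frobNorm Q) * frobNorm (P - Q) ^ 2 ≤
      frobInner (A P - A Q) (P - Q)
  growth : ∀ P Q : Mat 2 2, P.IsSymm → Q.IsSymm → P ≠ 0 →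
    frobNorm (A P - A Q) ≤ CA * φ'' (frobNorm P + frobNorm Q) * frobNorm (P - Q)

/-- A local weak solution `(u, π)` (with weak gradient `du` of `u`) of the generalized
Stokes system `−div A(Du) + ∇π = −div G`, `div u = 0` on `Ω`. -/
structure StokesSolution (φ φstar : ℝ → ℝ) (A : Mat 2 2 → Mat 2 2) (Ω : Set (Eu 2))
    (u : Eu 2 → Eu 2) (du : Eu 2 → Mat 2 2) (π : Eu 2 → ℝ) (G : Eu 2 → Mat 2 2) : Prop where
  grad : HasWeakGradOn u du Ω
  orliczGrad : ∀ K : Set (Eu 2), K ⊆ Ω → IsCompact K →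
    IntegrableOn (fun x => φ (frobNorm (du x))) K
  divFree : ∀ᵐ x ∂(volume.restrict Ω), Matrix.trace (du x) = 0
  piLocInt : LocallyIntegrableOn π Ω
  orliczPi : ∀ K : Set (Eu 2), K ⊆ Ω → IsCompact K →
    IntegrableOn (fun x => φstar |π x|) K
  GLocInt : ∀ i j, LocallyIntegrableOn (fun x => G x i j) Ω
  GSymm : ∀ x, (G x).IsSymm
  weakForm : ∀ ξ : Eu 2 → Eu 2, IsTest Ω ξ →
    (∫ x in Ω, frobInner (A (symPart (du x))) (symPart (gradOf ξ x)))
      - ∫ x in Ω, π x * divOf ξ x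
    = ∫ x in Ω, frobInner (G x) (symPart (gradOf ξ x))

/-- A local weak solution `h` (with weak gradient `dh`) of the homogeneous generalized
Stokes system `−div A(Dh) + ∇ρ = 0`, `div h = 0` on `U` (tested with divergence-free
test functions, which eliminates the pressure). -/
structure HomogStokes (φ : ℝ → ℝ) (A : Mat 2 2 → Mat 2 2) (U : Set (Eu 2))
    (h : Eu 2 → Eu 2) (dh : Eu 2 → Mat 2 2) : Prop where
  grad : HasWeakGradOn h dh U
  orliczGrad : ∀ K : Set (Eu 2), K ⊆ U → IsCompact K →
    IntegrableOn (fun x => φ (frobNorm (dh x))) K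
  divFree : ∀ᵐ x ∂(volume.restrict U), Matrix.trace (dh x) = 0
  weakForm : ∀ ξ : Eu 2 → Eu 2, IsTest U ξ → (∀ x, divOf ξ x = 0) →
    ∫ x in U, frobInner (A (symPart (dh x))) (symPart (gradOf ξ x)) = 0

/-! Everything runs through the two-sided dilation bounds `ScalingBounds ψ a b B`, which for
nonnegative `ψ` with `ψ 0 = 0` amount to `ψ` being of type `T(a, b, B)`. The derivative `φ'` has
such bounds with exponents `p - 1, q - 1`. In the derivative `φ'(a₀ + t) t / (a₀ + t)` of the
shifted function the factor `t / (a₀ + t)` scales like a power between `0` and `1`, so the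
exponents become `min p 2 - 1, max q 2 - 1`, and integration gives `p̄, q̄`. Conjugation turns
exponents `a ≤ b` into `b' ≤ a'`. For `(φ*)_{|A(P)|}` the shift argument is applied to
`(φ*)' = (φ')⁻¹`, whose exponents are `q' - 1, p' - 1`. -/

def ScalingBounds (ψ : ℝ → ℝ) (a b B : ℝ) : Prop :=
  ∀ l t : ℝ, 1 ≤ l → 0 ≤ t → B⁻¹ * l ^ a * ψ t ≤ ψ (l * t) ∧ ψ (l * t) ≤ B * l ^ b * ψ t

section TypeT

variable {ψ : ℝ → ℝ} {a b p q B K : ℝ}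

lemma TypeT.weaken (h : TypeT ψ p q K) (hψ : ∀ t, 0 ≤ t → 0 ≤ ψ t) {K' : ℝ} (hK : K ≤ K') :
    TypeT ψ p q K' := fun s t hs ht =>
  (h s t hs ht).trans <| by
    have : 0 ≤ max (s ^ p) (s ^ q) := le_max_of_le_left (Real.rpow_nonneg hs p)
    gcongr
    exact hψ t ht

lemma ScalingBounds.of_typeT (h : TypeT ψ p q K) (hpq : p ≤ q) (hK : 0 < K) :
    ScalingBounds ψ p q K := by
  intro l t hl ht
  have hl0 : 0 < l := one_pos.trans_le hl
  constructor
  · have h' := h l⁻¹ (l * t) (by positivity) (by positivity)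
    rw [inv_mul_cancel_left₀ hl0.ne',
      max_eq_left (Real.rpow_le_rpow_of_exponent_ge (by positivity) (inv_le_one_of_one_le₀ hl) hpq),
      Real.inv_rpow hl0.le] at h'
    calc K⁻¹ * l ^ p * ψ t ≤ K⁻¹ * l ^ p * (K * (l ^ p)⁻¹ * ψ (l * t)) := by gcongr
      _ = ψ (l * t) := by field_simp
  · simpa only [max_eq_right (Real.rpow_le_rpow_of_exponent_le hl hpq)] using h l t hl0.le ht

lemma ScalingBounds.typeT (h : ScalingBounds ψ a b B) (hψ0 : ψ 0 = 0)
    (hψ : ∀ t, 0 ≤ t → 0 ≤ ψ t) (ha : 0 < a) (hab : a ≤ b) (hB : 0 < B) : TypeT ψ a b B := by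
  intro s t hs ht
  rcases hs.eq_or_lt with rfl | hs0
  · simp [hψ0, Real.zero_rpow ha.ne', Real.zero_rpow (ha.trans_le hab).ne']
  rcases le_or_gt 1 s with h1s | h1s
  · calc ψ (s * t) ≤ B * s ^ b * ψ t := (h s t h1s ht).2
      _ ≤ B * max (s ^ a) (s ^ b) * ψ t := by gcongr; exacts [hψ t ht, le_max_right _ _]
  · have key := (h s⁻¹ (s * t) (one_le_inv₀ hs0 |>.mpr h1s.le) (by positivity)).1
    rw [inv_mul_cancel_left₀ hs0.ne', Real.inv_rpow hs] at key
    calc ψ (s * t) = B * s ^ a * (B⁻¹ * (s ^ a)⁻¹ * ψ (s * t)) := by field_simp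
      _ ≤ B * s ^ a * ψ t := by gcongr
      _ ≤ B * max (s ^ a) (s ^ b) * ψ t := by gcongr; exacts [hψ t ht, le_max_left _ _]

end TypeT

lemma conjExp_sub_one {x : ℝ} (hx : x ≠ 1) : conjExp x - 1 = (x - 1)⁻¹ := by
  have : x - 1 ≠ 0 := sub_ne_zero.mpr hx
  unfold conjExp
  field_simp
  ring

lemma one_lt_conjExp {x : ℝ} (hx : 1 < x) : 1 < conjExp x := by
  have := conjExp_sub_one hx.ne'
  have : 0 < (x - 1)⁻¹ := inv_pos.mpr (by linarith)
  linarith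

lemma conjExp_le_conjExp {x y : ℝ} (hx : 1 < x) (hxy : x ≤ y) : conjExp y ≤ conjExp x := by
  have h := inv_anti₀ (sub_pos.mpr hx) (sub_le_sub_right hxy 1)
  linarith [conjExp_sub_one hx.ne', conjExp_sub_one (hx.trans_le hxy).ne']

lemma conjExp_max_two {q : ℝ} (hq : 1 < q) : conjExp (max q 2) = min (conjExp q) 2 := by
  have h2 : conjExp 2 = 2 := by norm_num [conjExp]
  rcases le_total q 2 with h | h
  · rw [max_eq_right h, min_eq_right (h2 ▸ conjExp_le_conjExp hq h), h2]
  · rw [max_eq_left h, min_eq_left (h2 ▸ conjExp_le_conjExp one_lt_two h)]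

lemma conjExp_min_two {p : ℝ} (hp : 1 < p) : conjExp (min p 2) = max (conjExp p) 2 := by
  have h2 : conjExp 2 = 2 := by norm_num [conjExp]
  rcases le_total p 2 with h | h
  · rw [min_eq_left h, max_eq_left (h2 ▸ conjExp_le_conjExp hp h)]
  · rw [min_eq_right h, max_eq_right (h2 ▸ conjExp_le_conjExp one_lt_two h), h2]

lemma one_lt_pbar {p : ℝ} (hp : 1 < p) : 1 < pbar p := lt_min hp one_lt_two

lemma pbar_le_qbar {p q : ℝ} (hpq : p ≤ q) : pbar p ≤ qbar q :=
  (min_le_left p 2).trans (hpq.trans (le_max_left q 2))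

lemma one_le_conjExp_pbar_sub_one {p : ℝ} (hp : 1 < p) : 1 ≤ conjExp (pbar p) - 1 := by
  have : pbar p ≤ 2 := min_le_right p 2
  rw [conjExp_sub_one (one_lt_pbar hp).ne', one_le_inv₀ (by linarith [one_lt_pbar hp])]
  linarith

lemma inv_sub_one_le_conjExp_pbar_sub_one {p : ℝ} (hp : 1 < p) :
    (p - 1)⁻¹ ≤ conjExp (pbar p) - 1 := by
  have : pbar p ≤ p := min_le_left p 2
  rw [conjExp_sub_one (one_lt_pbar hp).ne']
  exact inv_anti₀ (by linarith [one_lt_pbar hp]) (by linarith)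

section Conjugate

variable {ψ : ℝ → ℝ} {a b B : ℝ}

lemma ScalingBounds.le_of_le_one (h : ScalingBounds ψ a b B) (hB : 0 < B) {σ r : ℝ}
    (hσ : 0 < σ) (hσ1 : σ ≤ 1) (hr : 0 ≤ r) : B⁻¹ * σ ^ b * ψ r ≤ ψ (σ * r) := by
  have key := (h σ⁻¹ (σ * r) (one_le_inv₀ hσ |>.mpr hσ1) (by positivity)).2
  rw [inv_mul_cancel_left₀ hσ.ne', Real.inv_rpow hσ.le] at key
  calc B⁻¹ * σ ^ b * ψ r ≤ B⁻¹ * σ ^ b * (B * (σ ^ b)⁻¹ * ψ (σ * r)) := by gcongr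
    _ = ψ (σ * r) := by field_simp

lemma ScalingBounds.bddAbove_conj (h : ScalingBounds ψ a b B) (hψ : ∀ t, 0 ≤ t → 0 ≤ ψ t)
    (hψ1 : 0 < ψ 1) (ha : 1 < a) (hB : 0 < B) (u : ℝ) :
    BddAbove ((fun t => u * t - ψ t) '' Ici 0) := by
  have hgrowth : Tendsto (fun t : ℝ => B⁻¹ * ψ 1 * t ^ (a - 1)) atTop atTop :=
    (tendsto_rpow_atTop (by linarith)).const_mul_atTop (by positivity)
  obtain ⟨T, hT⟩ := eventually_atTop.mp
    ((hgrowth.eventually_ge_atTop u).and (eventually_ge_atTop 1))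
  refine ⟨|u| * |T|, ?_⟩
  rintro _ ⟨t, ht, rfl⟩
  show u * t - ψ t ≤ |u| * |T|
  rcases le_total t T with htT | hTt
  · have : u * t ≤ |u| * |T| := by
      calc u * t ≤ |u| * t := mul_le_mul_of_nonneg_right (le_abs_self u) ht
        _ ≤ |u| * |T| := mul_le_mul_of_nonneg_left (htT.trans (le_abs_self T)) (abs_nonneg u)
    linarith [hψ t ht]
  · obtain ⟨hu, ht1⟩ := hT t hTt
    have ht0 : 0 < t := one_pos.trans_le ht1
    have hψt : B⁻¹ * t ^ a * ψ 1 ≤ ψ t := by simpa using (h t 1 ht1 zero_le_one).1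
    have : u * t ≤ B⁻¹ * t ^ a * ψ 1 := by
      calc u * t ≤ B⁻¹ * ψ 1 * t ^ (a - 1) * t := mul_le_mul_of_nonneg_right hu ht0.le
        _ = B⁻¹ * t ^ a * ψ 1 := by rw [Real.rpow_sub_one ht0.ne']; field_simp
    nlinarith [abs_nonneg u, abs_nonneg T]

lemma conjFn_nonneg (hψ0 : ψ 0 = 0) {u : ℝ} (hbdd : BddAbove ((fun t => u * t - ψ t) '' Ici 0)) :
    0 ≤ conjFn ψ u :=
  le_csSup hbdd ⟨0, self_mem_Ici, by simp [hψ0]⟩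

lemma conjFn_zero_nonpos (hψ : ∀ t, 0 ≤ t → 0 ≤ ψ t) : conjFn ψ 0 ≤ 0 :=
  csSup_le (nonempty_Ici.image _) <| by
    rintro _ ⟨t, ht, rfl⟩
    simpa using hψ t ht

/-- Substituting `t = σ r` in the supremum defining `ψ*(s u)`. -/
lemma conjFn_mul_le {s σ u : ℝ} (hs : 0 ≤ s) (hσ : 0 < σ)
    (hbdd : BddAbove ((fun t => u * t - ψ t) '' Ici 0))
    (hlow : ∀ r, 0 ≤ r → s * σ * ψ r ≤ ψ (σ * r)) :
    conjFn ψ (s * u) ≤ s * σ * conjFn ψ u := by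
  refine csSup_le (nonempty_Ici.image _) ?_
  rintro _ ⟨t, ht, rfl⟩
  have hr : 0 ≤ t / σ := div_nonneg ht hσ.le
  have hσr : σ * (t / σ) = t := mul_div_cancel₀ t hσ.ne'
  calc s * u * t - ψ t = s * σ * (u * (t / σ)) - ψ (σ * (t / σ)) := by
        rw [hσr]; field_simp
    _ ≤ s * σ * (u * (t / σ) - ψ (t / σ)) := by linarith [hlow _ hr]
    _ ≤ s * σ * conjFn ψ u := by
        gcongr
        exact le_csSup hbdd ⟨t / σ, hr, rfl⟩

lemma ScalingBounds.conjFn_mul_le_rpow (h : ScalingBounds ψ a b B) (hB : 0 < B)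
    {c s u : ℝ} (hs : 0 < s) (hc : c = a ∧ 1 ≤ B * s ∨ c = b ∧ B * s ≤ 1) (hc1 : 1 < c)
    (hbdd : BddAbove ((fun t => u * t - ψ t) '' Ici 0)) :
    conjFn ψ (s * u) ≤ B ^ (conjExp c - 1) * s ^ conjExp c * conjFn ψ u := by
  set σ := (B * s) ^ (c - 1)⁻¹ with hσ_def
  have hσ : 0 < σ := by positivity
  have hσc : σ ^ (c - 1) = B * s := Real.rpow_inv_rpow (by positivity) (by linarith)
  have hBσ : B⁻¹ * σ ^ c = s * σ := by
    rw [show c = (c - 1) + 1 by ring, Real.rpow_add_one hσ.ne', hσc]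
    field_simp
  have hlow : ∀ r, 0 ≤ r → s * σ * ψ r ≤ ψ (σ * r) := by
    intro r hr
    rw [← hBσ]
    rcases hc with ⟨rfl, hBs⟩ | ⟨rfl, hBs⟩
    · exact (h σ r (Real.one_le_rpow hBs (inv_nonneg.mpr (by linarith))) hr).1
    · exact h.le_of_le_one hB hσ
        (Real.rpow_le_one (by positivity) hBs (inv_nonneg.mpr (by linarith))) hr
  have hsσ : s * σ = B ^ (conjExp c - 1) * s ^ conjExp c := by
    rw [conjExp_sub_one hc1.ne', show conjExp c = (c - 1)⁻¹ + 1 by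
      linarith [conjExp_sub_one hc1.ne'], Real.rpow_add_one hs.ne', hσ_def,
      Real.mul_rpow hB.le hs.le]
    ring
  exact hsσ ▸ conjFn_mul_le hs.le hσ hbdd hlow

lemma ScalingBounds.typeT_conjFn (h : ScalingBounds ψ a b B) (hψ0 : ψ 0 = 0)
    (hψ : ∀ t, 0 ≤ t → 0 ≤ ψ t) (hψ1 : 0 < ψ 1) (ha : 1 < a) (hab : a ≤ b) (hB : 1 ≤ B) :
    TypeT (conjFn ψ) (conjExp b) (conjExp a) (B ^ (conjExp a - 1)) := by
  have hB0 : 0 < B := one_pos.trans_le hB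
  have hb : 1 < b := ha.trans_le hab
  have hba : conjExp b ≤ conjExp a := conjExp_le_conjExp ha hab
  intro s u hs hu
  have hbdd := h.bddAbove_conj hψ hψ1 ha hB0 u
  have hconj := conjFn_nonneg hψ0 hbdd
  rcases hs.eq_or_lt with rfl | hs0
  · rw [zero_mul, Real.zero_rpow (by linarith [one_lt_conjExp hb]),
      Real.zero_rpow (by linarith [one_lt_conjExp ha]), max_self, mul_zero, zero_mul]
    exact conjFn_zero_nonpos hψ
  rcases le_total 1 (B * s) with hBs | hBs
  · calc conjFn ψ (s * u) ≤ B ^ (conjExp a - 1) * s ^ conjExp a * conjFn ψ u :=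
          h.conjFn_mul_le_rpow hB0 hs0 (.inl ⟨rfl, hBs⟩) ha hbdd
      _ ≤ B ^ (conjExp a - 1) * max (s ^ conjExp b) (s ^ conjExp a) * conjFn ψ u := by
          gcongr; exact le_max_right _ _
  · calc conjFn ψ (s * u) ≤ B ^ (conjExp b - 1) * s ^ conjExp b * conjFn ψ u :=
          h.conjFn_mul_le_rpow hB0 hs0 (.inr ⟨rfl, hBs⟩) hb hbdd
      _ ≤ B ^ (conjExp a - 1) * max (s ^ conjExp b) (s ^ conjExp a) * conjFn ψ u := by
          gcongr; exact le_max_left _ _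

end Conjugate

lemma ScalingBounds.intervalIntegral {f : ℝ → ℝ} {c d B : ℝ}
    (h : ScalingBounds f (c - 1) (d - 1) B) (hf : MonotoneOn f (Ici 0)) :
    ScalingBounds (fun t => ∫ s in (0 : ℝ)..t, f s) c d B := by
  intro l t hl ht
  have hl0 : 0 < l := one_pos.trans_le hl
  have hsub : ∫ s in (0 : ℝ)..l * t, f s = l * ∫ s in (0 : ℝ)..t, f (l * s) := by
    rw [intervalIntegral.mul_integral_comp_mul_left, mul_zero]
  have hint : IntervalIntegrable f volume 0 t :=
    (hf.mono (by simp [uIcc_of_le ht, Icc_subset_Ici_self])).intervalIntegrable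
  have hint_l : IntervalIntegrable (fun s => f (l * s)) volume 0 t := by
    refine MonotoneOn.intervalIntegrable fun x hx y hy hxy => ?_
    rw [uIcc_of_le ht] at hx hy
    exact hf (mul_nonneg hl0.le hx.1) (mul_nonneg hl0.le hy.1) (by gcongr)
  have hpow (e : ℝ) : l ^ e = l * l ^ (e - 1) := by
    rw [Real.rpow_sub_one hl0.ne']; field_simp
  simp only [hsub]
  constructor
  · have := intervalIntegral.integral_mono_on ht (hint.const_mul _) hint_l
      fun s hs => (h l s hl hs.1).1
    rw [intervalIntegral.integral_const_mul] at this
    calc B⁻¹ * l ^ c * ∫ s in (0 : ℝ)..t, f s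
        = l * (B⁻¹ * l ^ (c - 1) * ∫ s in (0 : ℝ)..t, f s) := by rw [hpow c]; ring
      _ ≤ l * ∫ s in (0 : ℝ)..t, f (l * s) := by gcongr
  · have := intervalIntegral.integral_mono_on ht hint_l (hint.const_mul _)
      fun s hs => (h l s hl hs.1).2
    rw [intervalIntegral.integral_const_mul] at this
    calc l * ∫ s in (0 : ℝ)..t, f (l * s)
        ≤ l * (B * l ^ (d - 1) * ∫ s in (0 : ℝ)..t, f s) := by gcongr
      _ = B * l ^ d * ∫ s in (0 : ℝ)..t, f s := by rw [hpow d]; ring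

lemma rpow_min_two_sub_one_mul_le {l μ : ℝ} (hμ : 1 ≤ μ) (hμl : μ ≤ l) (a : ℝ) :
    l ^ (min a 2 - 1) * μ ≤ l * μ ^ (a - 1) := by
  have hμ0 : 0 < μ := one_pos.trans_le hμ
  have hl0 : 0 < l := hμ0.trans_le hμl
  rcases le_total a 2 with ha | ha
  · calc l ^ (min a 2 - 1) * μ = l * μ * l ^ (a - 2) := by
          rw [min_eq_left ha, show a - 1 = (a - 2) + 1 by ring, Real.rpow_add_one hl0.ne']; ring
      _ ≤ l * μ * μ ^ (a - 2) :=
          mul_le_mul_of_nonneg_left (Real.rpow_le_rpow_of_nonpos hμ0 hμl (by linarith))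
            (by positivity)
      _ = l * μ ^ (a - 1) := by
          rw [show a - 1 = (a - 2) + 1 by ring, Real.rpow_add_one hμ0.ne']; ring
  · rw [min_eq_right ha, show (2 : ℝ) - 1 = 1 by norm_num, Real.rpow_one]
    exact mul_le_mul_of_nonneg_left (Real.self_le_rpow_of_one_le hμ (by linarith)) hl0.le

lemma mul_rpow_sub_one_le_rpow_max_two {l μ : ℝ} (hμ : 1 ≤ μ) (hμl : μ ≤ l) (b : ℝ) :
    l * μ ^ (b - 1) ≤ l ^ (max b 2 - 1) * μ := by
  have hμ0 : 0 < μ := one_pos.trans_le hμ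
  have hl0 : 0 < l := hμ0.trans_le hμl
  rcases le_total b 2 with hb | hb
  · rw [max_eq_right hb, show (2 : ℝ) - 1 = 1 by norm_num, Real.rpow_one]
    refine mul_le_mul_of_nonneg_left ?_ hl0.le
    simpa using Real.rpow_le_rpow_of_exponent_le hμ (show b - 1 ≤ 1 by linarith)
  · calc l * μ ^ (b - 1) = l * μ * μ ^ (b - 2) := by
          rw [show b - 1 = (b - 2) + 1 by ring, Real.rpow_add_one hμ0.ne']; ring
      _ ≤ l * μ * l ^ (b - 2) :=
          mul_le_mul_of_nonneg_left (Real.rpow_le_rpow hμ0.le hμl (by linarith)) (by positivity)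
      _ = l ^ (max b 2 - 1) * μ := by
          rw [max_eq_left hb, show b - 1 = (b - 2) + 1 by ring, Real.rpow_add_one hl0.ne']; ring

section Shift

variable {g : ℝ → ℝ} {a₀ : ℝ}

lemma shiftDeriv_nonneg (hgm : MonotoneOn g (Ici 0)) (hg0 : g 0 = 0) (ha₀ : 0 ≤ a₀)
    {s : ℝ} (hs : 0 ≤ s) : 0 ≤ shiftDeriv g a₀ s := by
  have : 0 ≤ g (a₀ + s) := hg0 ▸ hgm self_mem_Ici (add_nonneg ha₀ hs) (add_nonneg ha₀ hs)
  unfold shiftDeriv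
  positivity

lemma shiftDeriv_monotoneOn (hgm : MonotoneOn g (Ici 0)) (hg0 : g 0 = 0) (ha₀ : 0 ≤ a₀) :
    MonotoneOn (shiftDeriv g a₀) (Ici 0) := by
  intro x hx y hy hxy
  rcases (mem_Ici.mp hx).eq_or_lt with rfl | hx0
  · simpa [shiftDeriv] using shiftDeriv_nonneg hgm hg0 ha₀ hy
  have hy0 : 0 < y := hx0.trans_le hxy
  have hgx : 0 ≤ g (a₀ + x) := hg0 ▸ hgm self_mem_Ici (mem_Ici.mpr (by positivity)) (by positivity)
  have hg : g (a₀ + x) ≤ g (a₀ + y) := hgm (mem_Ici.mpr (by positivity))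
    (mem_Ici.mpr (by positivity)) (by linarith)
  have hfrac : x / (a₀ + x) ≤ y / (a₀ + y) := by
    rw [div_le_div_iff₀ (by positivity) (by positivity)]
    nlinarith
  simp only [shiftDeriv, mul_div_assoc]
  exact mul_le_mul hg hfrac (by positivity) (hgx.trans hg)

lemma shiftFn_nonneg (hgm : MonotoneOn g (Ici 0)) (hg0 : g 0 = 0) (ha₀ : 0 ≤ a₀)
    {t : ℝ} (ht : 0 ≤ t) : 0 ≤ shiftFn g a₀ t :=
  intervalIntegral.integral_nonneg ht fun _ hs => shiftDeriv_nonneg hgm hg0 ha₀ hs.1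

lemma shiftFn_pos (hgm : MonotoneOn g (Ici 0)) (hg0 : g 0 = 0) (hg : ∀ x, 0 < x → 0 < g x)
    (ha₀ : 0 ≤ a₀) {t : ℝ} (ht : 0 < t) : 0 < shiftFn g a₀ t := by
  refine intervalIntegral.intervalIntegral_pos_of_pos_on ?_ (fun s hs => ?_) ht
  · exact ((shiftDeriv_monotoneOn hgm hg0 ha₀).mono
      (by simp [uIcc_of_le ht.le, Icc_subset_Ici_self])).intervalIntegrable
  · have := hg (a₀ + s) (by linarith [hs.1])
    have := hs.1
    positivity

/-- Writing `a₀ + l s = μ (a₀ + s)` with `1 ≤ μ ≤ l`, the factor `s / (a₀ + s)` contributes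
the power `l / μ`, which is what moves the exponents of `g` towards `2`. -/
lemma ScalingBounds.shiftDeriv {a b B : ℝ} (hg : ScalingBounds g (a - 1) (b - 1) B)
    (hB : 0 ≤ B) (hgm : MonotoneOn g (Ici 0)) (hg0 : g 0 = 0) (ha₀ : 0 ≤ a₀) :
    ScalingBounds (shiftDeriv g a₀) (min a 2 - 1) (max b 2 - 1) B := by
  intro l s hl hs
  rcases hs.eq_or_lt with rfl | hs0
  · simp [_root_.shiftDeriv]
  set x := a₀ + s with hx_def
  have hx : 0 < x := by positivity
  set μ := (a₀ + l * s) / x with hμ_def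
  have hμx : μ * x = a₀ + l * s := div_mul_cancel₀ _ hx.ne'
  have hμ1 : 1 ≤ μ := by rw [hμ_def, le_div_iff₀ hx]; nlinarith
  have hμl : μ ≤ l := by rw [hμ_def, div_le_iff₀ hx]; nlinarith
  have hμ0 : 0 < μ := one_pos.trans_le hμ1
  have hgx : 0 ≤ g x := hg0 ▸ hgm self_mem_Ici hx.le hx.le
  have hls : _root_.shiftDeriv g a₀ (l * s) = l / μ * g (μ * x) * (s / x) := by
    rw [_root_.shiftDeriv, ← hμx]; field_simp
  have hs_eq : _root_.shiftDeriv g a₀ s = g x * (s / x) := by rw [_root_.shiftDeriv, mul_div_assoc]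
  obtain ⟨hlow, hup⟩ := hg μ x hμ1 hx.le
  have hw : 0 ≤ g x * (s / x) := mul_nonneg hgx (by positivity)
  have hB' : 0 ≤ B⁻¹ := inv_nonneg.mpr hB
  rw [hls, hs_eq]
  constructor
  · calc B⁻¹ * l ^ (min a 2 - 1) * (g x * (s / x))
        = B⁻¹ * (l ^ (min a 2 - 1) * μ) * (g x * (s / x)) / μ := by field_simp
      _ ≤ B⁻¹ * (l * μ ^ (a - 1)) * (g x * (s / x)) / μ := by
          gcongr B⁻¹ * ?_ * _ / _; exact rpow_min_two_sub_one_mul_le hμ1 hμl a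
      _ = l / μ * (B⁻¹ * μ ^ (a - 1) * g x) * (s / x) := by ring
      _ ≤ l / μ * g (μ * x) * (s / x) := by gcongr
  · calc l / μ * g (μ * x) * (s / x)
        ≤ l / μ * (B * μ ^ (b - 1) * g x) * (s / x) := by gcongr
      _ = B * (l * μ ^ (b - 1)) * (g x * (s / x)) / μ := by ring
      _ ≤ B * (l ^ (max b 2 - 1) * μ) * (g x * (s / x)) / μ := by
          gcongr B * ?_ * _ / _; exact mul_rpow_sub_one_le_rpow_max_two hμ1 hμl b
      _ = B * l ^ (max b 2 - 1) * (g x * (s / x)) := by field_simp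

lemma ScalingBounds.shiftFn {a b B : ℝ} (hg : ScalingBounds g (a - 1) (b - 1) B)
    (hB : 0 ≤ B) (hgm : MonotoneOn g (Ici 0)) (hg0 : g 0 = 0) (ha₀ : 0 ≤ a₀) :
    ScalingBounds (shiftFn g a₀) (min a 2) (max b 2) B :=
  (hg.shiftDeriv hB hgm hg0 ha₀).intervalIntegral (shiftDeriv_monotoneOn hgm hg0 ha₀)

lemma typeT_shiftFn_of_scalingBounds {a b B K : ℝ} (h : ScalingBounds (shiftFn g a₀) a b B)
    (hgm : MonotoneOn g (Ici 0)) (hg0 : g 0 = 0) (ha₀ : 0 ≤ a₀) (ha : 0 < a) (hab : a ≤ b)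
    (hB : 0 < B) (hBK : B ≤ K) : TypeT (shiftFn g a₀) a b K :=
  have hnonneg t (ht : 0 ≤ t) := shiftFn_nonneg hgm hg0 ha₀ ht
  (h.typeT intervalIntegral.integral_same hnonneg ha hab hB).weaken hnonneg hBK

end Shift

section RightInverse

variable {g : ℝ → ℝ} {a b B : ℝ}

lemma StrictMonoOn.rcInv_apply (hg : StrictMonoOn g (Ici 0)) {t : ℝ} (ht : 0 ≤ t) :
    rcInv g (g t) = t := by
  have : {s : ℝ | 0 ≤ s ∧ g s ≤ g t} = Icc 0 t := by
    ext s
    simp only [mem_ofPred_eq, mem_Icc]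
    exact and_congr_right fun hs => hg.le_iff_le hs ht
  rw [rcInv, this, csSup_Icc ht]

lemma StrictMonoOn.monotoneOn_rcInv (hg : StrictMonoOn g (Ici 0))
    (hsurj : SurjOn g (Ici 0) (Ici 0)) : MonotoneOn (rcInv g) (Ici 0) := by
  rintro _ hu _ hv huv
  obtain ⟨t, ht, rfl⟩ := hsurj hu
  obtain ⟨t', ht', rfl⟩ := hsurj hv
  rw [hg.rcInv_apply ht, hg.rcInv_apply ht']
  exact (hg.le_iff_le ht ht').mp huv

lemma ScalingBounds.surjOn (h : ScalingBounds g a b B) (hgc : ContinuousOn g (Ici 0))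
    (hg0 : g 0 = 0) (hg1 : 0 < g 1) (ha : 0 < a) (hB : 0 < B) : SurjOn g (Ici 0) (Ici 0) := by
  intro u hu
  have hgrowth : Tendsto (fun l : ℝ => B⁻¹ * g 1 * l ^ a) atTop atTop :=
    (tendsto_rpow_atTop ha).const_mul_atTop (by positivity)
  obtain ⟨l, hul, hl⟩ := ((hgrowth.eventually_ge_atTop u).and (eventually_ge_atTop 1)).exists
  have hgl : u ≤ g l := by
    have := (h l 1 hl zero_le_one).1
    rw [mul_one] at this
    linarith
  obtain ⟨s, hs, rfl⟩ := intermediate_value_Icc (zero_le_one.trans hl)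
    (hgc.mono Icc_subset_Ici_self) ⟨by rwa [hg0], hgl⟩
  exact ⟨s, hs.1, rfl⟩

lemma ScalingBounds.rcInv (h : ScalingBounds g a b B) (hg : StrictMonoOn g (Ici 0))
    (hsurj : SurjOn g (Ici 0) (Ici 0)) (ha : 0 < a) (hab : a ≤ b) (hB : 1 ≤ B) :
    ScalingBounds (rcInv g) b⁻¹ a⁻¹ (B ^ a⁻¹) := by
  have hB0 : 0 < B := one_pos.trans_le hB
  intro l u hl hu
  have hl0 : 0 < l := one_pos.trans_le hl
  obtain ⟨t, ht, rfl⟩ := hsurj hu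
  have hgt : 0 ≤ g t := hu
  obtain ⟨t', ht', hgt'⟩ := hsurj (show l * g t ∈ Ici 0 from mul_nonneg hl0.le hgt)
  rw [← hgt', hg.rcInv_apply ht, hg.rcInv_apply ht']
  constructor
  · set σ := (B ^ a⁻¹)⁻¹ * l ^ b⁻¹
    have hσ : 0 ≤ σ := by positivity
    refine (hg.le_iff_le (mul_nonneg hσ ht) ht').mp ?_
    rw [hgt']
    rcases le_total σ 1 with hσ1 | hσ1
    · calc g (σ * t) ≤ g t := hg.monotoneOn (mul_nonneg hσ ht) ht (mul_le_of_le_one_left ht hσ1)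
        _ ≤ l * g t := le_mul_of_one_le_left hgt hl
    · have hσb : B * σ ^ b ≤ l := by
        have hBab : B ≤ B ^ (a⁻¹ * b) :=
          Real.self_le_rpow_of_one_le hB (by rw [inv_mul_eq_div, one_le_div ha]; exact hab)
        rw [Real.mul_rpow (by positivity) (by positivity), Real.inv_rpow (by positivity),
          ← Real.rpow_mul hB0.le, Real.rpow_inv_rpow hl0.le (ha.trans_le hab).ne']
        calc B * ((B ^ (a⁻¹ * b))⁻¹ * l) = B / B ^ (a⁻¹ * b) * l := by ring
          _ ≤ 1 * l := by gcongr; exact div_le_one_of_le₀ hBab (by positivity)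
          _ = l := one_mul l
      calc g (σ * t) ≤ B * σ ^ b * g t := (h σ t hσ1 ht).2
        _ ≤ l * g t := by gcongr
  · set σ := B ^ a⁻¹ * l ^ a⁻¹ with hσ_def
    have hσ1 : 1 ≤ σ := one_le_mul_of_one_le_of_one_le
      (Real.one_le_rpow hB (by positivity)) (Real.one_le_rpow hl (by positivity))
    refine (hg.le_iff_le ht' (mul_nonneg (zero_le_one.trans hσ1) ht)).mp ?_
    have hσa : σ ^ a = B * l := by
      rw [hσ_def, ← Real.mul_rpow hB0.le hl0.le, Real.rpow_inv_rpow (by positivity) ha.ne']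
    calc g t' = B⁻¹ * σ ^ a * g t := by rw [hgt', hσa]; field_simp
      _ ≤ g (σ * t) := (h σ t hσ1 ht).1

end RightInverse

section NFunction

variable {φ φ' : ℝ → ℝ}

lemma IsNFunction.exists_eq_slope (hφ : IsNFunction φ φ') {x y : ℝ} (hx : 0 ≤ x) (hxy : x < y) :
    ∃ ξ ∈ Ioo x y, φ y - φ x = φ' ξ * (y - x) := by
  have hcont : ContinuousOn φ (Icc x y) := fun z hz =>
    (hφ.hasDeriv z (hx.trans hz.1)).continuousWithinAt.mono
      (Icc_subset_Ici_self.trans (Ici_subset_Ici.mpr hx))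
  obtain ⟨ξ, hξ, hslope⟩ := exists_hasDerivAt_eq_slope φ φ' hxy hcont fun z hz =>
    (hφ.hasDeriv z (hx.trans hz.1.le)).hasDerivAt (Ici_mem_nhds (hx.trans_lt hz.1))
  exact ⟨ξ, hξ, by rw [hslope, div_mul_cancel₀ _ (sub_ne_zero.mpr hxy.ne')]⟩

lemma IsNFunction.deriv_nonneg (hφ : IsNFunction φ φ') {t : ℝ} (ht : 0 ≤ t) : 0 ≤ φ' t :=
  hφ.derivZero ▸ hφ.mono self_mem_Ici ht ht

lemma IsNFunction.pos (hφ : IsNFunction φ φ') {t : ℝ} (ht : 0 < t) : 0 < φ t := by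
  obtain ⟨ξ, hξ, hslope⟩ := hφ.exists_eq_slope le_rfl ht
  have := hφ.derivPos ξ hξ.1
  rw [hφ.zero, sub_zero] at hslope
  rw [hslope]
  positivity

lemma IsNFunction.nonneg (hφ : IsNFunction φ φ') {t : ℝ} (ht : 0 ≤ t) : 0 ≤ φ t := by
  rcases ht.eq_or_lt with rfl | ht0
  · exact hφ.zero.ge
  · exact (hφ.pos ht0).le

lemma IsNFunction.le_mul_deriv (hφ : IsNFunction φ φ') {t : ℝ} (ht : 0 < t) : φ t ≤ t * φ' t := by
  obtain ⟨ξ, hξ, hslope⟩ := hφ.exists_eq_slope le_rfl ht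
  have := hφ.mono hξ.1.le ht.le hξ.2.le
  rw [hφ.zero, sub_zero, sub_zero] at hslope
  nlinarith

lemma IsNFunction.mul_deriv_le (hφ : IsNFunction φ φ') {t : ℝ} (ht : 0 < t) :
    t * φ' t ≤ φ (2 * t) := by
  obtain ⟨ξ, hξ, hslope⟩ := hφ.exists_eq_slope ht.le (by linarith : t < 2 * t)
  have := hφ.mono (mem_Ici.mpr ht.le) (mem_Ici.mpr (ht.trans hξ.1).le) hξ.1.le
  nlinarith [hφ.nonneg ht.le]

lemma IsNFunction.one_le_of_typeT (hφ : IsNFunction φ φ') {p q K : ℝ} (hT : TypeT φ p q K) :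
    1 ≤ K := by
  have := hT 1 1 zero_le_one zero_le_one
  rw [one_mul, Real.one_rpow, Real.one_rpow, max_self, mul_one] at this
  exact (le_mul_iff_one_le_left (hφ.pos one_pos)).mp this

/-- A consequence of `φ t ≤ t φ' t ≤ φ (2 t)`. -/
lemma IsNFunction.scalingBounds_deriv (hφ : IsNFunction φ φ') {p q B : ℝ}
    (h : ScalingBounds φ p q B) (hB : 1 ≤ B) :
    ScalingBounds φ' (p - 1) (q - 1) (2 ^ q * B ^ 2) := by
  have hB0 : 0 < B := one_pos.trans_le hB
  intro l t hl ht
  rcases ht.eq_or_lt with rfl | ht0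
  · simp [hφ.derivZero]
  have hl0 : 0 < l := one_pos.trans_le hl
  have hlt : 0 < l * t := by positivity
  have hφ't := hφ.deriv_nonneg ht
  have hsplit (e : ℝ) : l ^ e = l ^ (e - 1) * l := by
    rw [Real.rpow_sub_one hl0.ne']; field_simp
  have hdouble : φ (2 * t) ≤ B * 2 ^ q * φ t := (h 2 t one_le_two ht).2
  constructor
  · refine le_of_mul_le_mul_right ?_ hlt
    calc (2 ^ q * B ^ 2)⁻¹ * l ^ (p - 1) * φ' t * (l * t)
        = B⁻¹ * l ^ p * ((B * 2 ^ q)⁻¹ * (t * φ' t)) := by rw [hsplit p]; field_simp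
      _ ≤ B⁻¹ * l ^ p * ((B * 2 ^ q)⁻¹ * φ (2 * t)) := by gcongr; exact hφ.mul_deriv_le ht0
      _ ≤ B⁻¹ * l ^ p * φ t := by
          gcongr
          rw [inv_mul_le_iff₀ (by positivity)]
          exact hdouble
      _ ≤ φ (l * t) := (h l t hl ht).1
      _ ≤ φ' (l * t) * (l * t) := (hφ.le_mul_deriv hlt).trans_eq (mul_comm _ _)
  · refine le_of_mul_le_mul_right ?_ hlt
    calc φ' (l * t) * (l * t) ≤ φ (2 * (l * t)) := (mul_comm _ _).trans_le (hφ.mul_deriv_le hlt)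
      _ ≤ B * (2 * l) ^ q * φ t := by
          rw [← mul_assoc]; exact (h (2 * l) t (by linarith) ht).2
      _ ≤ B * (2 * l) ^ q * (t * φ' t) := by gcongr; exact hφ.le_mul_deriv ht0
      _ = B * 2 ^ q * l ^ (q - 1) * φ' t * (l * t) := by
          rw [Real.mul_rpow zero_le_two hl0.le, hsplit q]; ring
      _ ≤ 2 ^ q * B ^ 2 * l ^ (q - 1) * φ' t * (l * t) := by
          gcongr ?_ * _ * _ * _
          nlinarith [mul_nonneg (mul_nonneg (Real.rpow_pos_of_pos two_pos q).le hB0.le)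
            (sub_nonneg.mpr hB)]

end NFunction

section AssumptionPhi

variable {φ φ' φ'' : ℝ → ℝ} {c₀ c₁ cm : ℝ}

lemma AssumptionPhi.strictMonoOn_deriv (hφ : AssumptionPhi φ φ' φ'' c₀ c₁ cm) :
    StrictMonoOn φ' (Ici 0) := by
  refine strictMonoOn_of_deriv_pos (convex_Ici 0) hφ.contOne fun x hx => ?_
  rw [interior_Ici, mem_Ioi] at hx
  rw [(hφ.derivTwo x hx).deriv]
  have : 0 < c₁ * x * φ'' x := by
    linarith [hφ.upperBound x hx, hφ.nfun.derivPos x hx, mul_assoc c₁ x (φ'' x)]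
  exact pos_of_mul_pos_right this (by have := hφ.c1_pos; positivity)

lemma AssumptionPhi.typeT_shiftFn_rcInv (hφ : AssumptionPhi φ φ' φ'' c₀ c₁ cm)
    {p q C K : ℝ} (hφ' : ScalingBounds φ' (p - 1) (q - 1) C) (hp : 1 < p) (hpq : p ≤ q)
    (hC : 1 ≤ C) (hK : C ^ (p - 1)⁻¹ ≤ K) {a₀ : ℝ} (ha₀ : 0 ≤ a₀) :
    TypeT (shiftFn (rcInv φ') a₀) (conjExp (qbar q)) (conjExp (pbar p)) K := by
  have hq : 1 < q := hp.trans_le hpq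
  have hstrict := hφ.strictMonoOn_deriv
  have hsurj := hφ'.surjOn hφ.contOne hφ.nfun.derivZero (hφ.nfun.derivPos 1 one_pos)
    (by linarith) (by linarith)
  have hinv : ScalingBounds (rcInv φ') (conjExp q - 1) (conjExp p - 1) (C ^ (p - 1)⁻¹) := by
    rw [conjExp_sub_one hq.ne', conjExp_sub_one hp.ne']
    exact hφ'.rcInv hstrict hsurj (by linarith) (by linarith) hC
  have hinv0 : rcInv φ' 0 = 0 := by
    simpa [hφ.nfun.derivZero] using hstrict.rcInv_apply le_rfl
  have hinv_mono := hstrict.monotoneOn_rcInv hsurj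
  have hshift := hinv.shiftFn (by positivity) hinv_mono hinv0 ha₀
  rw [← conjExp_max_two hq, ← conjExp_min_two hp] at hshift
  exact typeT_shiftFn_of_scalingBounds hshift hinv_mono hinv0 ha₀
    (zero_lt_one.trans (one_lt_conjExp (hq.trans_le (le_max_left q 2) : 1 < qbar q)))
    (conjExp_le_conjExp (one_lt_pbar hp) (pbar_le_qbar hpq)) (by positivity) hK

end AssumptionPhi

/-- **Lemma 2.3.** If `φ` is of type `T(p, q, K₁)` then there is `K`, depending only on
`K₁, p, q`, such that `φ_{|P|}` is of type `T(p̄, q̄, K)` and both `(φ_{|P|})*` and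
`(φ*)_{|A(P)|}` are of type `T(q̄', p̄', K)`. -/
theorem shifted_type_T (p q K₁ : ℝ) (hp : 1 < p) (hpq : p ≤ q) :
    ∃ K : ℝ, 0 < K ∧
      ∀ (φ φ' φ'' : ℝ → ℝ) (c₀ c₁ cm cA CA : ℝ) (A : Mat 2 2 → Mat 2 2) (P : Mat 2 2),
        AssumptionPhi φ φ' φ'' c₀ c₁ cm → TypeT φ p q K₁ →
        AssumptionA φ'' A cA CA →
        TypeT (shiftFn φ' (frobNorm P)) (pbar p) (qbar q) K ∧
        TypeT (conjFn (shiftFn φ' (frobNorm P))) (conjExp (qbar q)) (conjExp (pbar p)) K ∧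
        TypeT (shiftFn (rcInv φ') (frobNorm (A P))) (conjExp (qbar q)) (conjExp (pbar p)) K := by
  refine ⟨(2 ^ q * max K₁ 1 ^ 2) ^ (conjExp (pbar p) - 1), by positivity, ?_⟩
  intro φ φ' φ'' c₀ c₁ cm cA CA A P hφ hT _
  have hK₁ : 1 ≤ K₁ := hφ.nfun.one_le_of_typeT hT
  rw [max_eq_left hK₁]
  set C := 2 ^ q * K₁ ^ 2
  have hC : 1 ≤ C :=
    one_le_mul_of_one_le_of_one_le (Real.one_le_rpow one_le_two (by linarith)) (one_le_pow₀ hK₁)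
  have hφ' : ScalingBounds φ' (p - 1) (q - 1) C :=
    hφ.nfun.scalingBounds_deriv (.of_typeT hT hpq (by linarith)) hK₁
  have hmono := hφ.nfun.mono
  have hzero := hφ.nfun.derivZero
  have hψ : ScalingBounds (shiftFn φ' (frobNorm P)) (pbar p) (qbar q) C :=
    hφ'.shiftFn (by linarith) hmono hzero (Real.sqrt_nonneg _)
  exact ⟨typeT_shiftFn_of_scalingBounds hψ hmono hzero (Real.sqrt_nonneg _)
      (by linarith [one_lt_pbar hp]) (pbar_le_qbar hpq) (by linarith)
      (Real.self_le_rpow_of_one_le hC (one_le_conjExp_pbar_sub_one hp)),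
    hψ.typeT_conjFn intervalIntegral.integral_same
      (fun t ht => shiftFn_nonneg hmono hzero (Real.sqrt_nonneg _) ht)
      (shiftFn_pos hmono hzero hφ.nfun.derivPos (Real.sqrt_nonneg _) one_pos)
      (one_lt_pbar hp) (pbar_le_qbar hpq) hC,
    hφ.typeT_shiftFn_rcInv hφ' hp hpq hC
      (Real.rpow_le_rpow_of_exponent_le hC (inv_sub_one_le_conjExp_pbar_sub_one hp))
      (Real.sqrt_nonneg _)⟩

end
end

section
/- Let φ satisfy Assumption (φ), and define A : ℝ^{2×2} → ℝ^{2×2} by A(Q) := φ'(|Q|) Q/|Q| for Q ≠ 0 and A(0) := 0. Then A satisfies Assumption (A); in particular A is continuous on ℝ^{2×2}, locally Lipschitz on ℝ^{2×2}∖{0}, A(D) is symmetric for symmetric D, and there exist constants c, C > 0, depending only on the characteristics of φ, such that for all symmetric 2×2 matrices P ≠ 0 and Q: (A(P) − A(Q))·(P − Q) ≥ c φ''(|P| + |Q|) |P − Q|² and |A(P) − A(Q)| ≤ C φ''(|P| + |Q|) |P − Q|. -/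
/-!
From `c₀ t φ''(t) ≤ φ'(t) ≤ c₁ t φ''(t)`, the logarithmic derivative of `φ'` lies between
`1 / (c₁ t)` and `1 / (c₀ t)`, so `t ↦ φ'(t) / t^{1/c₁}` is non-decreasing and
`t ↦ φ'(t) / t^{1/c₀}` non-increasing. Together with Bernoulli's inequality this bounds
`φ'(a) - φ'(b)` and `φ'(a) + φ'(b)`, for `0 ≤ b ≤ a`, above and below by constant multiples
of `φ''(a + b) (a - b)` and `φ''(a + b) (a + b)` respectively.

For a radial field `A x = g(‖x‖) x / ‖x‖` on a real inner product space, both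
`⟪A x - A y, x - y⟫` and `‖A x - A y‖²` are affine functions of `⟪x, y⟫ ∈ [-‖x‖‖y‖, ‖x‖‖y‖]`,
so it suffices to check them at the two endpoints, where they reduce to exactly these
scalar bounds. The Frobenius inner product identifies `2 × 2` matrices with a Euclidean space.
-/

open MeasureTheory Metric Set Filter
open scoped ENNReal RealInnerProductSpace Topology

noncomputable section

lemma add_mul_nonneg_of_abs_le {u v r s : ℝ} (hneg : 0 ≤ u - v * r) (hpos : 0 ≤ u + v * r)
    (hs : |s| ≤ r) : 0 ≤ u + v * s := by
  rcases abs_le.1 hs with ⟨hs₁, hs₂⟩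
  rcases le_total 0 v with hv | hv <;> nlinarith

lemma min_mul_one_sub_le_one_sub_rpow {x β : ℝ} (hx₀ : 0 ≤ x) (hx₁ : x ≤ 1) (hβ : 0 < β) :
    min 1 β * (1 - x) ≤ 1 - x ^ β := by
  rcases le_total β 1 with h | h
  · have := rpow_one_add_le_one_add_mul_self (s := x - 1) (by linarith) hβ.le h
    rw [add_sub_cancel] at this
    rw [min_eq_right h]
    linarith
  · have := Real.rpow_le_rpow_of_exponent_ge' hx₀ hx₁ zero_le_one h
    rw [Real.rpow_one] at this
    rw [min_eq_left h]
    linarith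

lemma one_sub_rpow_le_max_mul_one_sub {x β : ℝ} (hx₀ : 0 ≤ x) (hx₁ : x ≤ 1) (hβ : 0 ≤ β) :
    1 - x ^ β ≤ max 1 β * (1 - x) := by
  rcases le_total β 1 with h | h
  · have := Real.rpow_le_rpow_of_exponent_ge' hx₀ hx₁ hβ h
    rw [Real.rpow_one] at this
    rw [max_eq_left h]
    linarith
  · have := one_add_mul_self_le_rpow_one_add (s := x - 1) (by linarith) h
    rw [add_sub_cancel] at this
    rw [max_eq_right h]
    linarith

theorem sub_mul_log_le_sub_mul_log {g g' : ℝ → ℝ} {β a b : ℝ}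
    (hg : ∀ t, 0 < t → HasDerivAt g (g' t) t) (hβ : ∀ t, 0 < t → β ≤ t * g' t)
    (hb : 0 < b) (hba : b ≤ a) : g b - β * Real.log b ≤ g a - β * Real.log a := by
  have hderiv : ∀ t, 0 < t →
      HasDerivAt (fun t => g t - β * Real.log t) (g' t - β * t⁻¹) t := fun t ht =>
    (hg t ht).sub ((Real.hasDerivAt_log ht.ne').const_mul β)
  have hmono : MonotoneOn (fun t => g t - β * Real.log t) (Ioi 0) := by
    refine monotoneOn_of_hasDerivWithinAt_nonneg (f' := fun t => g' t - β * t⁻¹) (convex_Ioi 0)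
      (fun t ht => (hderiv t ht).continuousAt.continuousWithinAt) (fun t ht => ?_)
      (fun t ht => ?_) <;> rw [interior_Ioi] at ht
    · exact (hderiv t ht).hasDerivWithinAt
    · rw [sub_nonneg, ← div_eq_mul_inv, div_le_iff₀' ht]
      exact hβ t ht
  exact hmono hb (hb.trans_le hba) hba

lemma div_norm_mul_norm {E : Type*} [NormedAddCommGroup E] {g : ℝ → ℝ} (hg0 : g 0 = 0)
    (x : E) : g ‖x‖ / ‖x‖ * ‖x‖ = g ‖x‖ := by
  rcases eq_or_ne x 0 with rfl | hx
  · simp [hg0]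
  · exact div_mul_cancel₀ _ (norm_ne_zero_iff.2 hx)

section RadialField

variable {E : Type*} [NormedAddCommGroup E] [NormedSpace ℝ E]

def radialField (g : ℝ → ℝ) (x : E) : E := (g ‖x‖ / ‖x‖) • x

@[simp] lemma radialField_zero (g : ℝ → ℝ) : radialField g (0 : E) = 0 := by
  simp [radialField]

lemma norm_radialField {g : ℝ → ℝ} (hg0 : g 0 = 0) (x : E) :
    ‖radialField g x‖ = |g ‖x‖| := by
  rw [radialField, norm_smul, Real.norm_eq_abs, abs_div, abs_norm]
  exact div_norm_mul_norm (g := fun t => |g t|) (by simp [hg0]) x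

theorem continuous_radialField {g : ℝ → ℝ} (hg : ContinuousOn g (Ici 0)) (hg0 : g 0 = 0) :
    Continuous (radialField g : E → E) := by
  have hgn : Continuous fun x : E => g ‖x‖ :=
    hg.comp_continuous continuous_norm fun x => mem_Ici.2 (norm_nonneg x)
  refine continuous_iff_continuousAt.2 fun x => ?_
  rcases eq_or_ne x 0 with rfl | hx
  · rw [ContinuousAt, radialField_zero, tendsto_zero_iff_norm_tendsto_zero]
    simp_rw [norm_radialField hg0]
    simpa [hg0] using hgn.abs.tendsto (0 : E)
  · exact (hgn.continuousAt.div continuous_norm.continuousAt (norm_ne_zero_iff.2 hx)).smul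
      continuousAt_id

end RadialField

section InnerProductSpace

variable {E : Type*} [NormedAddCommGroup E] [InnerProductSpace ℝ E]

theorem mul_norm_sub_sq_le_inner_smul_sub_smul {α β c : ℝ} {x y : E}
    (hsub : c * (‖x‖ - ‖y‖) ^ 2 ≤ (α * ‖x‖ - β * ‖y‖) * (‖x‖ - ‖y‖))
    (hadd : c * (‖x‖ + ‖y‖) ^ 2 ≤ (α * ‖x‖ + β * ‖y‖) * (‖x‖ + ‖y‖)) :
    c * ‖x - y‖ ^ 2 ≤ ⟪α • x - β • y, x - y⟫ := by
  have hinner : ⟪α • x - β • y, x - y⟫ = α * ‖x‖ ^ 2 - (α + β) * ⟪x, y⟫ + β * ‖y‖ ^ 2 := by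
    simp only [inner_sub_left, inner_sub_right, real_inner_smul_left,
      real_inner_self_eq_norm_sq, real_inner_comm x y]
    ring
  rw [hinner, norm_sub_sq_real, ← sub_nonneg]
  have key := add_mul_nonneg_of_abs_le
    (u := α * ‖x‖ ^ 2 + β * ‖y‖ ^ 2 - c * (‖x‖ ^ 2 + ‖y‖ ^ 2)) (v := 2 * c - α - β)
    (by linear_combination hadd) (by linear_combination hsub) (abs_real_inner_le_norm x y)
  linarith

theorem norm_smul_sub_smul_le {α β C : ℝ} (hC : 0 ≤ C) {x y : E}
    (hsub : |α * ‖x‖ - β * ‖y‖| ≤ C * |‖x‖ - ‖y‖|)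
    (hadd : |α * ‖x‖ + β * ‖y‖| ≤ C * (‖x‖ + ‖y‖)) :
    ‖α • x - β • y‖ ≤ C * ‖x - y‖ := by
  have hsub2 := pow_le_pow_left₀ (abs_nonneg _) hsub 2
  have hadd2 := pow_le_pow_left₀ (abs_nonneg _) hadd 2
  rw [mul_pow, sq_abs, sq_abs] at hsub2
  rw [mul_pow, sq_abs] at hadd2
  have hnorm : ‖α • x - β • y‖ ^ 2 = α ^ 2 * ‖x‖ ^ 2 - 2 * α * β * ⟪x, y⟫ + β ^ 2 * ‖y‖ ^ 2 := by
    rw [norm_sub_sq_real, norm_smul, norm_smul, real_inner_smul_left, real_inner_smul_right,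
      mul_pow, mul_pow, Real.norm_eq_abs, Real.norm_eq_abs, sq_abs, sq_abs]
    ring
  rw [← sq_le_sq₀ (norm_nonneg _) (by positivity), hnorm, mul_pow, norm_sub_sq_real,
    ← sub_nonneg]
  have key := add_mul_nonneg_of_abs_le
    (u := C ^ 2 * (‖x‖ ^ 2 + ‖y‖ ^ 2) - α ^ 2 * ‖x‖ ^ 2 - β ^ 2 * ‖y‖ ^ 2)
    (v := 2 * α * β - 2 * C ^ 2) (by linear_combination hadd2) (by linear_combination hsub2)
    (abs_real_inner_le_norm x y)
  linarith

end InnerProductSpace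

-- `2 ^ c₀⁻¹` is the doubling constant of `φ'`; `min 1 c₁⁻¹` and `max 1 c₀⁻¹` come from
-- Bernoulli's inequality for `(b / a) ^ c₁⁻¹` and `(b / a) ^ c₀⁻¹`.
def coerciveConst (c₀ c₁ : ℝ) : ℝ := min 1 c₁⁻¹ * c₀ / 2 ^ c₀⁻¹

def growthConst (c₀ c₁ : ℝ) : ℝ := 2 * c₁ * max 1 c₀⁻¹

lemma coerciveConst_pos {c₀ c₁ : ℝ} (h₀ : 0 < c₀) (h₁ : 0 < c₁) : 0 < coerciveConst c₀ c₁ := by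
  unfold coerciveConst; positivity

lemma growthConst_pos (c₀ : ℝ) {c₁ : ℝ} (h₁ : 0 < c₁) : 0 < growthConst c₀ c₁ := by
  unfold growthConst; positivity

namespace AssumptionPhi

variable {φ φ' φ'' : ℝ → ℝ} {c₀ c₁ cm : ℝ}

lemma deriv_le_deriv (hφ : AssumptionPhi φ φ' φ'' c₀ c₁ cm) {s t : ℝ} (hs : 0 ≤ s)
    (hst : s ≤ t) : φ' s ≤ φ' t :=
  hφ.nfun.mono (mem_Ici.2 hs) (mem_Ici.2 (hs.trans hst)) hst

lemma deriv_nonneg (hφ : AssumptionPhi φ φ' φ'' c₀ c₁ cm) {t : ℝ} (ht : 0 ≤ t) : 0 ≤ φ' t :=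
  hφ.nfun.derivZero ▸ hφ.deriv_le_deriv le_rfl ht

lemma secondDeriv_pos (hφ : AssumptionPhi φ φ' φ'' c₀ c₁ cm) {t : ℝ} (ht : 0 < t) :
    0 < φ'' t := by
  have := (hφ.nfun.derivPos t ht).trans_le (hφ.upperBound t ht)
  exact pos_of_mul_pos_right (pos_of_mul_pos_right this hφ.c1_pos.le) ht.le

lemma deriv_le_rpow_mul (hφ : AssumptionPhi φ φ' φ'' c₀ c₁ cm) {a b : ℝ} (hb : 0 ≤ b)
    (hba : b ≤ a) : φ' b ≤ (b / a) ^ c₁⁻¹ * φ' a := by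
  rcases hb.eq_or_lt with rfl | hb
  · simp [hφ.nfun.derivZero, Real.zero_rpow (inv_ne_zero hφ.c1_pos.ne')]
  have ha := hb.trans_le hba
  have hpa := hφ.nfun.derivPos a ha
  have key := sub_mul_log_le_sub_mul_log (g := fun t => Real.log (φ' t)) (β := c₁⁻¹)
    (fun t ht => (hφ.derivTwo t ht).log (hφ.nfun.derivPos t ht).ne') (fun t ht => ?_) hb hba
  · rw [← Real.log_le_log_iff (hφ.nfun.derivPos b hb) (by positivity),
      Real.log_mul (by positivity) hpa.ne', Real.log_rpow (by positivity),
      Real.log_div hb.ne' ha.ne']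
    linarith
  · rw [← mul_div_assoc, le_div_iff₀ (hφ.nfun.derivPos t ht), inv_mul_le_iff₀ hφ.c1_pos]
    exact hφ.upperBound t ht

lemma rpow_mul_le_deriv (hφ : AssumptionPhi φ φ' φ'' c₀ c₁ cm) {a b : ℝ} (hb : 0 ≤ b)
    (hba : b ≤ a) : (b / a) ^ c₀⁻¹ * φ' a ≤ φ' b := by
  rcases hb.eq_or_lt with rfl | hb
  · simp [hφ.nfun.derivZero, Real.zero_rpow (inv_ne_zero hφ.c0_pos.ne')]
  have ha := hb.trans_le hba
  have hpa := hφ.nfun.derivPos a ha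
  have key := sub_mul_log_le_sub_mul_log (g := fun t => -Real.log (φ' t)) (β := -c₀⁻¹)
    (fun t ht => ((hφ.derivTwo t ht).log (hφ.nfun.derivPos t ht).ne').neg) (fun t ht => ?_) hb hba
  · rw [← Real.log_le_log_iff (by positivity) (hφ.nfun.derivPos b hb),
      Real.log_mul (by positivity) hpa.ne', Real.log_rpow (by positivity),
      Real.log_div hb.ne' ha.ne']
    linarith
  · rw [mul_neg, neg_le_neg_iff, ← mul_div_assoc, div_le_iff₀ (hφ.nfun.derivPos t ht),
      le_inv_mul_iff₀ hφ.c0_pos]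
    exact hφ.lowerBound t ht

lemma deriv_add_le_two_rpow_mul (hφ : AssumptionPhi φ φ' φ'' c₀ c₁ cm) {a b : ℝ} (hb : 0 ≤ b)
    (hba : b ≤ a) (ha : 0 < a) : φ' (a + b) ≤ 2 ^ c₀⁻¹ * φ' a := by
  have hcomp := hφ.rpow_mul_le_deriv ha.le (le_add_of_nonneg_right hb)
  have hone : 1 ≤ 2 ^ c₀⁻¹ * (a / (a + b)) ^ c₀⁻¹ := by
    rw [← Real.mul_rpow zero_le_two (by positivity)]
    refine Real.one_le_rpow ?_ (inv_nonneg.2 hφ.c0_pos.le)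
    rw [← mul_div_assoc, one_le_div (by positivity)]
    linarith
  calc φ' (a + b) ≤ 2 ^ c₀⁻¹ * (a / (a + b)) ^ c₀⁻¹ * φ' (a + b) :=
        le_mul_of_one_le_left (hφ.deriv_nonneg (by positivity)) hone
    _ ≤ 2 ^ c₀⁻¹ * φ' a := by rw [mul_assoc]; gcongr

lemma mul_secondDeriv_add_le (hφ : AssumptionPhi φ φ' φ'' c₀ c₁ cm) {a b : ℝ} (hb : 0 ≤ b)
    (hba : b ≤ a) (ha : 0 < a) : c₀ / 2 ^ c₀⁻¹ * (φ'' (a + b) * (a + b)) ≤ φ' a := by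
  rw [div_mul_eq_mul_div, div_le_iff₀ (by positivity), mul_comm (φ' a), mul_comm (φ'' _)]
  exact (hφ.lowerBound (a + b) (by positivity)).trans (hφ.deriv_add_le_two_rpow_mul hb hba ha)

lemma coerciveConst_mul_le_deriv_sub (hφ : AssumptionPhi φ φ' φ'' c₀ c₁ cm) {a b : ℝ}
    (hb : 0 ≤ b) (hba : b ≤ a) (ha : 0 < a) :
    coerciveConst c₀ c₁ * φ'' (a + b) * (a - b) ≤ φ' a - φ' b := by
  have hw : c₀ / 2 ^ c₀⁻¹ * φ'' (a + b) ≤ φ' a / a := by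
    rw [le_div_iff₀ ha]
    have := hφ.secondDeriv_pos (t := a + b) (by positivity)
    calc c₀ / 2 ^ c₀⁻¹ * φ'' (a + b) * a ≤ c₀ / 2 ^ c₀⁻¹ * (φ'' (a + b) * (a + b)) := by
          have := hφ.c0_pos
          rw [mul_assoc]; gcongr; linarith
      _ ≤ φ' a := hφ.mul_secondDeriv_add_le hb hba ha
  calc coerciveConst c₀ c₁ * φ'' (a + b) * (a - b)
      = min 1 c₁⁻¹ * (a - b) * (c₀ / 2 ^ c₀⁻¹ * φ'' (a + b)) := by
        unfold coerciveConst; ring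
    _ ≤ min 1 c₁⁻¹ * (a - b) * (φ' a / a) :=
        mul_le_mul_of_nonneg_left hw
          (mul_nonneg (by have := hφ.c1_pos; positivity) (sub_nonneg.2 hba))
    _ = min 1 c₁⁻¹ * (1 - b / a) * φ' a := by field_simp
    _ ≤ (1 - (b / a) ^ c₁⁻¹) * φ' a := by
        gcongr
        · exact hφ.deriv_nonneg ha.le
        · exact min_mul_one_sub_le_one_sub_rpow (by positivity) (div_le_one_of_le₀ hba ha.le)
            (inv_pos.2 hφ.c1_pos)
    _ ≤ φ' a - φ' b := by linarith [hφ.deriv_le_rpow_mul hb hba]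

lemma deriv_sub_le_growthConst_mul (hφ : AssumptionPhi φ φ' φ'' c₀ c₁ cm) {a b : ℝ}
    (hb : 0 ≤ b) (hba : b ≤ a) (ha : 0 < a) :
    φ' a - φ' b ≤ growthConst c₀ c₁ * φ'' (a + b) * (a - b) := by
  have hw : φ' a / a ≤ 2 * c₁ * φ'' (a + b) := by
    rw [div_le_iff₀ ha]
    have := hφ.secondDeriv_pos (t := a + b) (by positivity)
    calc φ' a ≤ φ' (a + b) := hφ.deriv_le_deriv ha.le (by linarith)
      _ ≤ c₁ * ((a + b) * φ'' (a + b)) := hφ.upperBound _ (by positivity)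
      _ ≤ 2 * c₁ * φ'' (a + b) * a := by
          nlinarith [mul_nonneg (mul_nonneg hφ.c1_pos.le this.le) (sub_nonneg.2 hba)]
  calc φ' a - φ' b ≤ (1 - (b / a) ^ c₀⁻¹) * φ' a := by linarith [hφ.rpow_mul_le_deriv hb hba]
    _ ≤ max 1 c₀⁻¹ * (1 - b / a) * φ' a := by
        gcongr
        · exact hφ.deriv_nonneg ha.le
        · exact one_sub_rpow_le_max_mul_one_sub (by positivity) (div_le_one_of_le₀ hba ha.le)
            (inv_nonneg.2 hφ.c0_pos.le)
    _ = max 1 c₀⁻¹ * (a - b) * (φ' a / a) := by field_simp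
    _ ≤ max 1 c₀⁻¹ * (a - b) * (2 * c₁ * φ'' (a + b)) := by
        gcongr
    _ = growthConst c₀ c₁ * φ'' (a + b) * (a - b) := by unfold growthConst; ring

lemma coerciveConst_mul_sub_sq_le (hφ : AssumptionPhi φ φ' φ'' c₀ c₁ cm) {a b : ℝ}
    (ha : 0 < a) (hb : 0 ≤ b) :
    coerciveConst c₀ c₁ * φ'' (a + b) * (a - b) ^ 2 ≤ (φ' a - φ' b) * (a - b) := by
  rcases le_total b a with h | h
  · have := mul_le_mul_of_nonneg_right (hφ.coerciveConst_mul_le_deriv_sub hb h ha)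
      (sub_nonneg.2 h)
    linarith
  · have := mul_le_mul_of_nonneg_right
      (hφ.coerciveConst_mul_le_deriv_sub ha.le h (ha.trans_le h)) (sub_nonneg.2 h)
    rw [add_comm] at this
    linarith

lemma coerciveConst_mul_add_sq_le (hφ : AssumptionPhi φ φ' φ'' c₀ c₁ cm) {a b : ℝ}
    (ha : 0 < a) (hb : 0 ≤ b) :
    coerciveConst c₀ c₁ * φ'' (a + b) * (a + b) ^ 2 ≤ (φ' a + φ' b) * (a + b) := by
  have hc₀ := hφ.c0_pos
  have hw := hφ.secondDeriv_pos (t := a + b) (by linarith)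
  have hconst : coerciveConst c₀ c₁ ≤ c₀ / 2 ^ c₀⁻¹ := by
    unfold coerciveConst
    rw [mul_div_assoc]
    exact mul_le_of_le_one_left (by positivity) (min_le_left _ _)
  have hsum : c₀ / 2 ^ c₀⁻¹ * (φ'' (a + b) * (a + b)) ≤ φ' a + φ' b := by
    rcases le_total b a with h | h
    · linarith [hφ.mul_secondDeriv_add_le hb h ha, hφ.deriv_nonneg hb]
    · linarith [add_comm a b ▸ hφ.mul_secondDeriv_add_le ha.le h (ha.trans_le h),
        hφ.deriv_nonneg ha.le]
  calc coerciveConst c₀ c₁ * φ'' (a + b) * (a + b) ^ 2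
      = coerciveConst c₀ c₁ * (φ'' (a + b) * (a + b)) * (a + b) := by ring
    _ ≤ c₀ / 2 ^ c₀⁻¹ * (φ'' (a + b) * (a + b)) * (a + b) := by gcongr
    _ ≤ (φ' a + φ' b) * (a + b) := by gcongr

lemma abs_deriv_sub_le (hφ : AssumptionPhi φ φ' φ'' c₀ c₁ cm) {a b : ℝ} (ha : 0 < a)
    (hb : 0 ≤ b) : |φ' a - φ' b| ≤ growthConst c₀ c₁ * φ'' (a + b) * |a - b| := by
  rcases le_total b a with h | h
  · rw [abs_of_nonneg (sub_nonneg.2 (hφ.deriv_le_deriv hb h)), abs_of_nonneg (sub_nonneg.2 h)]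
    exact hφ.deriv_sub_le_growthConst_mul hb h ha
  · rw [abs_sub_comm, abs_of_nonneg (sub_nonneg.2 (hφ.deriv_le_deriv ha.le h)), abs_sub_comm,
      abs_of_nonneg (sub_nonneg.2 h), add_comm]
    exact hφ.deriv_sub_le_growthConst_mul ha.le h (ha.trans_le h)

lemma abs_deriv_add_le (hφ : AssumptionPhi φ φ' φ'' c₀ c₁ cm) {a b : ℝ} (ha : 0 < a)
    (hb : 0 ≤ b) : |φ' a + φ' b| ≤ growthConst c₀ c₁ * φ'' (a + b) * (a + b) := by
  have hc₁ := hφ.c1_pos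
  have hw := hφ.secondDeriv_pos (t := a + b) (by linarith)
  rw [abs_of_nonneg (add_nonneg (hφ.deriv_nonneg ha.le) (hφ.deriv_nonneg hb))]
  calc φ' a + φ' b ≤ 2 * φ' (a + b) := by
        linarith [hφ.deriv_le_deriv ha.le (le_add_of_nonneg_right hb),
          hφ.deriv_le_deriv hb (le_add_of_nonneg_left ha.le)]
    _ ≤ 2 * (c₁ * ((a + b) * φ'' (a + b))) := by
        gcongr
        exact hφ.upperBound _ (by linarith)
    _ = 2 * c₁ * 1 * φ'' (a + b) * (a + b) := by ring
    _ ≤ growthConst c₀ c₁ * φ'' (a + b) * (a + b) := by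
        unfold growthConst
        gcongr
        exact le_max_left _ _

section InnerProductSpace

variable {E : Type*} [NormedAddCommGroup E] [InnerProductSpace ℝ E]

theorem coerciveConst_mul_le_inner_radialField_sub (hφ : AssumptionPhi φ φ' φ'' c₀ c₁ cm)
    {x : E} (hx : x ≠ 0) (y : E) :
    coerciveConst c₀ c₁ * φ'' (‖x‖ + ‖y‖) * ‖x - y‖ ^ 2
      ≤ ⟪radialField φ' x - radialField φ' y, x - y⟫ := by
  have ha := norm_pos_iff.2 hx
  apply mul_norm_sub_sq_le_inner_smul_sub_smul <;>
    rw [div_norm_mul_norm hφ.nfun.derivZero, div_norm_mul_norm hφ.nfun.derivZero]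
  · exact hφ.coerciveConst_mul_sub_sq_le ha (norm_nonneg y)
  · exact hφ.coerciveConst_mul_add_sq_le ha (norm_nonneg y)

theorem norm_radialField_sub_le (hφ : AssumptionPhi φ φ' φ'' c₀ c₁ cm) {x : E} (hx : x ≠ 0)
    (y : E) :
    ‖radialField φ' x - radialField φ' y‖ ≤ growthConst c₀ c₁ * φ'' (‖x‖ + ‖y‖) * ‖x - y‖ := by
  have ha := norm_pos_iff.2 hx
  have := hφ.secondDeriv_pos (t := ‖x‖ + ‖y‖) (by positivity)
  have := growthConst_pos c₀ hφ.c1_pos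
  apply norm_smul_sub_smul_le (by positivity) <;>
    rw [div_norm_mul_norm hφ.nfun.derivZero, div_norm_mul_norm hφ.nfun.derivZero]
  · exact hφ.abs_deriv_sub_le ha (norm_nonneg y)
  · exact hφ.abs_deriv_add_le ha (norm_nonneg y)

theorem exists_lipschitz_radialField_near (hφ : AssumptionPhi φ φ' φ'' c₀ c₁ cm) {x : E}
    (hx : x ≠ 0) : ∃ K ε : ℝ, 0 < ε ∧ ∀ y₁ y₂ : E, ‖y₁ - x‖ < ε → ‖y₂ - x‖ < ε →
      ‖radialField φ' y₁ - radialField φ' y₂‖ ≤ K * ‖y₁ - y₂‖ := by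
  have hr := norm_pos_iff.2 hx
  have hc₀ := hφ.c0_pos
  refine ⟨growthConst c₀ c₁ * (φ' (3 * ‖x‖) / (c₀ * ‖x‖)), ‖x‖ / 2, by positivity,
    fun y₁ y₂ h₁ h₂ => ?_⟩
  have hnear : ∀ y : E, ‖y - x‖ < ‖x‖ / 2 → ‖x‖ / 2 < ‖y‖ ∧ ‖y‖ < 3 * ‖x‖ / 2 := fun y hy => by
    have := abs_le.1 (abs_norm_sub_norm_le y x)
    constructor <;> linarith
  obtain ⟨hl₁, hu₁⟩ := hnear y₁ h₁
  obtain ⟨hl₂, hu₂⟩ := hnear y₂ h₂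
  have ht : 0 < ‖y₁‖ + ‖y₂‖ := by linarith
  have hw : φ'' (‖y₁‖ + ‖y₂‖) ≤ φ' (3 * ‖x‖) / (c₀ * ‖x‖) := by
    rw [le_div_iff₀ (by positivity)]
    have := hφ.secondDeriv_pos ht
    calc φ'' (‖y₁‖ + ‖y₂‖) * (c₀ * ‖x‖) ≤ c₀ * ((‖y₁‖ + ‖y₂‖) * φ'' (‖y₁‖ + ‖y₂‖)) := by
          nlinarith [mul_pos hc₀ this]
      _ ≤ φ' (‖y₁‖ + ‖y₂‖) := hφ.lowerBound _ ht
      _ ≤ φ' (3 * ‖x‖) := hφ.deriv_le_deriv ht.le (by linarith)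
  have := growthConst_pos c₀ hφ.c1_pos
  calc ‖radialField φ' y₁ - radialField φ' y₂‖
      ≤ growthConst c₀ c₁ * φ'' (‖y₁‖ + ‖y₂‖) * ‖y₁ - y₂‖ :=
        hφ.norm_radialField_sub_le (norm_pos_iff.1 (by linarith)) y₂
    _ ≤ growthConst c₀ c₁ * (φ' (3 * ‖x‖) / (c₀ * ‖x‖)) * ‖y₁ - y₂‖ := by gcongr

end InnerProductSpace

end AssumptionPhi

def frobEquiv (m n : ℕ) : Mat m n ≃ₗ[ℝ] EuclideanSpace ℝ (Fin m × Fin n) :=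
  (Matrix.ofLinearEquiv ℝ).symm ≪≫ₗ (LinearEquiv.curry ℝ ℝ _ _).symm ≪≫ₗ
    (WithLp.linearEquiv 2 ℝ _).symm

lemma inner_frobEquiv {m n : ℕ} (P Q : Mat m n) :
    ⟪frobEquiv m n P, frobEquiv m n Q⟫ = frobInner P Q := by
  simp [frobEquiv, PiLp.inner_apply, Fintype.sum_prod_type, frobInner, mul_comm]

lemma norm_frobEquiv {m n : ℕ} (P : Mat m n) : ‖frobEquiv m n P‖ = frobNorm P := by
  rw [norm_eq_sqrt_real_inner, inner_frobEquiv, frobNorm]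

def modelField {m n : ℕ} (g : ℝ → ℝ) (Q : Mat m n) : Mat m n :=
  if Q = 0 then 0 else (g (frobNorm Q) / frobNorm Q) • Q

lemma frobEquiv_modelField {m n : ℕ} (g : ℝ → ℝ) (Q : Mat m n) :
    frobEquiv m n (modelField g Q) = radialField g (frobEquiv m n Q) := by
  unfold modelField radialField
  split_ifs with hQ
  · simp [hQ]
  · rw [map_smul, norm_frobEquiv]

theorem AssumptionPhi.assumptionA_modelField {φ φ' φ'' : ℝ → ℝ} {c₀ c₁ cm : ℝ}
    (hφ : AssumptionPhi φ φ' φ'' c₀ c₁ cm) :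
    AssumptionA φ'' (modelField φ') (coerciveConst c₀ c₁) (growthConst c₀ c₁) := by
  have hmodel := frobEquiv_modelField (m := 2) (n := 2) φ'
  have hne : ∀ Q : Mat 2 2, Q ≠ 0 → frobEquiv 2 2 Q ≠ 0 := fun Q hQ => by simpa using hQ
  refine ⟨?_, fun P hP => ?_, by simp [modelField], fun D hD => ?_,
    coerciveConst_pos hφ.c0_pos hφ.c1_pos, growthConst_pos c₀ hφ.c1_pos,
    fun P Q _ _ hP => ?_, fun P Q _ _ hP => ?_⟩
  · let eL := (frobEquiv 2 2).toContinuousLinearEquiv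
    have : modelField φ' = eL.symm ∘ radialField φ' ∘ eL :=
      funext fun Q => eL.injective (by simp [eL, hmodel])
    rw [this]
    exact eL.symm.continuous.comp
      ((continuous_radialField hφ.contOne hφ.nfun.derivZero).comp eL.continuous)
  · obtain ⟨K, ε, hε, hK⟩ := hφ.exists_lipschitz_radialField_near (hne P hP)
    refine ⟨K, ε, hε, fun Q₁ Q₂ h₁ h₂ => ?_⟩
    simp only [← norm_frobEquiv, map_sub, hmodel] at h₁ h₂ ⊢
    exact hK _ _ h₁ h₂
  · unfold modelField
    split_ifs
    exacts [Matrix.isSymm_zero, hD.smul _]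
  · have := hφ.coerciveConst_mul_le_inner_radialField_sub (hne P hP) (frobEquiv 2 2 Q)
    rwa [← hmodel, ← hmodel, ← map_sub, ← map_sub, inner_frobEquiv, norm_frobEquiv,
      norm_frobEquiv, norm_frobEquiv] at this
  · have := hφ.norm_radialField_sub_le (hne P hP) (frobEquiv 2 2 Q)
    rwa [← hmodel, ← hmodel, ← map_sub, ← map_sub, norm_frobEquiv, norm_frobEquiv,
      norm_frobEquiv, norm_frobEquiv] at this

/-- **The model vector field satisfies Assumption (A).** If `φ` satisfies Assumption (φ),
then `A(Q) := φ'(|Q|) Q/|Q|` (with `A(0) = 0`) satisfies Assumption (A), with constants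
depending only on the characteristics of `φ`. -/
theorem model_vector_field_assumptionA (c₀ c₁ cm : ℝ) :
    ∃ cA CA : ℝ, 0 < cA ∧ 0 < CA ∧
      ∀ φ φ' φ'' : ℝ → ℝ,
        AssumptionPhi φ φ' φ'' c₀ c₁ cm →
        AssumptionA φ''
          (fun Q : Mat 2 2 => if Q = 0 then 0 else (φ' (frobNorm Q) / frobNorm Q) • Q)
          cA CA := by
  by_cases hc : 0 < c₀ ∧ 0 < c₁
  · exact ⟨coerciveConst c₀ c₁, growthConst c₀ c₁, coerciveConst_pos hc.1 hc.2,
      growthConst_pos c₀ hc.2, fun _ _ _ hφ => hφ.assumptionA_modelField⟩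
  · exact ⟨1, 1, one_pos, one_pos, fun _ _ _ hφ => absurd ⟨hφ.c0_pos, hφ.c1_pos⟩ hc⟩

end
end
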